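/- Let X be a compact metric space with its Borel σ-algebra, μ and ν Borel probability measures on X, and c : X × X → ℝ continuous and nonnegative with c(x,y) = 0 whenever x = y. Define the Sinkhorn loss S_{c,ε}(μ,ν) = W_{c,ε}(μ,ν) − (1/2)·W_{c,ε}(μ,μ) − (1/2)·W_{c,ε}(ν,ν). Then lim_{ε → 0⁺} S_{c,ε}(μ,ν) = W_c(μ,ν), the unregularized optimal transport cost. -/

import Mathlib

/-!
Since `KL ≥ 0`, the entropic cost `W_{c,ε}` dominates the transport cost `W_c` for `ε > 0`.
Conversely, every coupling `γ` of `μ` and `ν` can be replaced, at an arbitrarily small extra cost,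
by a coupling absolutely continuous with respect to `μ ⊗ ν`: cut the space into finitely many
small measurable cells `A i` and spread the mass `γ (A i × A j)` over `A i × A j` as
`μ[|A i] ⊗ ν[|A j]`; uniform continuity of `c` controls the change of cost. The entropic cost of
such a coupling tends to its transport cost as `ε → 0`, hence `W_{c,ε}(μ,ν) → W_c(μ,ν)`. Finally
`W_c(μ,μ) = 0` through the diagonal coupling, so the two correction terms of the Sinkhorn loss
vanish in the limit.
-/

open MeasureTheory Real

open Classical in
/-- Kullback–Leibler divergence: `∫ log(dμ/dρ) dμ` if `μ ≪ ρ`, `+∞` otherwise. -/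
noncomputable def KL {Ω : Type*} [MeasurableSpace Ω] (μ ρ : Measure Ω) : EReal :=
  if μ ≪ ρ then ((∫ ω, Real.log ((μ.rnDeriv ρ ω).toReal) ∂μ : ℝ) : EReal) else ⊤

/-- `γ` is a coupling of `μ` and `ν`. -/
def IsCoupling {A B : Type*} [MeasurableSpace A] [MeasurableSpace B]
    (γ : Measure (A × B)) (μ : Measure A) (ν : Measure B) : Prop :=
  IsProbabilityMeasure γ ∧ γ.map Prod.fst = μ ∧ γ.map Prod.snd = ν

/-- Entropically smoothed optimal transport cost. -/
noncomputable def Wce {X : Type*} [MeasurableSpace X]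
    (c : X × X → ℝ) (ε : ℝ) (μ ν : Measure X) : EReal :=
  ⨅ γ : {γ : Measure (X × X) // IsCoupling γ μ ν},
    ((∫ p, c p ∂γ.1 : ℝ) : EReal) + (ε : EReal) * KL γ.1 (μ.prod ν)

/-- The Sinkhorn loss. -/
noncomputable def Sinkhorn {X : Type*} [MeasurableSpace X]
    (c : X × X → ℝ) (ε : ℝ) (μ ν : Measure X) : EReal :=
  Wce c ε μ ν - ((1 / 2 : ℝ) : EReal) * Wce c ε μ μ - ((1 / 2 : ℝ) : EReal) * Wce c ε ν ν

open Set Filter Topology Function ProbabilityTheory InformationTheory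
open scoped ENNReal

lemma KL_nonneg {Ω : Type*} [MeasurableSpace Ω] (μ ρ : Measure Ω)
    [IsProbabilityMeasure μ] [IsProbabilityMeasure ρ] : 0 ≤ KL μ ρ := by
  unfold KL
  split_ifs with hac
  · change 0 ≤ ((∫ ω, llr μ ρ ω ∂μ : ℝ) : EReal)
    rw [← toReal_klDiv_of_measure_eq hac (by simp)]
    exact_mod_cast ENNReal.toReal_nonneg
  · exact le_top

structure IsMeasurablePartition {X ι : Type*} [MeasurableSpace X] (A : ι → Set X) : Prop where
  measurableSet : ∀ i, MeasurableSet (A i)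
  pairwise_disjoint : Pairwise (Disjoint on A)
  iUnion_eq_univ : ⋃ i, A i = univ

namespace IsMeasurablePartition

variable {X Y ι κ : Type*} [MeasurableSpace X] [MeasurableSpace Y] {A : ι → Set X}
  {B : κ → Set Y}

lemma prod (hA : IsMeasurablePartition A) (hB : IsMeasurablePartition B) :
    IsMeasurablePartition fun ij : ι × κ => A ij.1 ×ˢ B ij.2 where
  measurableSet ij := (hA.measurableSet ij.1).prod (hB.measurableSet ij.2)
  pairwise_disjoint ij kl hne := by
    rw [Function.onFun, Set.disjoint_prod]
    by_cases h : ij.1 = kl.1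
    · exact Or.inr (hB.pairwise_disjoint fun h' => hne (Prod.ext h h'))
    · exact Or.inl (hA.pairwise_disjoint h)
  iUnion_eq_univ := by
    rw [Set.iUnion_prod, hA.iUnion_eq_univ, hB.iUnion_eq_univ, Set.univ_prod_univ]

lemma tsum_measure_inter [Countable ι] (hA : IsMeasurablePartition A) (μ : Measure X)
    {s : Set X} (hs : MeasurableSet s) : ∑' i, μ (s ∩ A i) = μ s := by
  have hdisj : Pairwise (Disjoint on fun i => s ∩ A i) := fun i j hij =>
    (hA.pairwise_disjoint hij).mono Set.inter_subset_right Set.inter_subset_right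
  rw [← measure_iUnion hdisj fun i => hs.inter (hA.measurableSet i), ← Set.inter_iUnion,
    hA.iUnion_eq_univ, Set.inter_univ]

lemma tsum_measure_prod_right [Countable κ] (hB : IsMeasurablePartition B)
    (γ : Measure (X × Y)) {s : Set X} (hs : MeasurableSet s) :
    ∑' j, γ (s ×ˢ B j) = γ (s ×ˢ univ) := by
  rw [← measure_iUnion (fun j k hjk => Set.disjoint_prod.2 (Or.inr (hB.pairwise_disjoint hjk)))
    fun j => hs.prod (hB.measurableSet j), ← Set.prod_iUnion, hB.iUnion_eq_univ]

lemma cond_apply_of_ne (hA : IsMeasurablePartition A) (μ : Measure X) {i k : ι} (hik : i ≠ k) :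
    μ[A i | A k] = 0 := by
  rw [cond_apply (hA.measurableSet k), (hA.pairwise_disjoint hik.symm).inter_eq, measure_empty,
    mul_zero]

end IsMeasurablePartition

lemma exists_isMeasurablePartition_fin_dist_lt {X : Type*} [MetricSpace X] [CompactSpace X]
    [MeasurableSpace X] [OpensMeasurableSpace X] {r : ℝ} (hr : 0 < r) :
    ∃ (n : ℕ) (A : Fin n → Set X), IsMeasurablePartition A ∧
      ∀ k, ∀ x ∈ A k, ∀ y ∈ A k, dist x y < r := by
  obtain ⟨t, -, ht, hcover⟩ := finite_cover_balls_of_compact (isCompact_univ (X := X)) (half_pos hr)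
  obtain ⟨n, center, hcenter⟩ := ht.fin_embedding
  set ball : Fin n → Set X := fun k => Metric.ball (center k) (r / 2)
  refine ⟨n, disjointed ball, ⟨fun k => ?_, disjoint_disjointed ball, ?_⟩, fun k x hx y hy => ?_⟩
  · rw [disjointed_eq_inter_compl]
    exact Metric.isOpen_ball.measurableSet.inter
      (.iInter fun j => .iInter fun _ => Metric.isOpen_ball.measurableSet.compl)
  · refine Set.eq_univ_of_forall fun x => ?_
    obtain ⟨y, hy, hxy⟩ := Set.mem_iUnion₂.1 (hcover (Set.mem_univ x))
    obtain ⟨k, rfl⟩ := hcenter ▸ hy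
    rw [iUnion_disjointed]
    exact Set.mem_iUnion.2 ⟨k, hxy⟩
  · have hx' := Metric.mem_ball.1 (disjointed_subset ball k hx)
    have hy' := Metric.mem_ball.1 (disjointed_subset ball k hy)
    linarith [dist_triangle_right x y (center k)]

lemma lintegral_le_of_measure_cells_eq {Z ι : Type*} [MeasurableSpace Z] [Countable ι]
    {C : ι → Set Z} (hC : IsMeasurablePartition C) {γ γ' : Measure Z}
    (hcell : ∀ k, γ (C k) = γ' (C k)) {f : Z → ℝ≥0∞} {δ : ℝ≥0∞}
    (hosc : ∀ k, ∀ p ∈ C k, ∀ q ∈ C k, f p ≤ f q + δ) :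
    ∫⁻ z, f z ∂γ ≤ ∫⁻ z, f z ∂γ' + 2 * δ * γ' univ := by
  have hsplit : ∀ ρ : Measure Z, ∫⁻ z, f z ∂ρ = ∑' k, ∫⁻ z in C k, f z ∂ρ := fun ρ => by
    rw [← lintegral_iUnion hC.measurableSet hC.pairwise_disjoint, hC.iUnion_eq_univ,
      setLIntegral_univ]
  have hcell_le : ∀ k, ∫⁻ z in C k, f z ∂γ ≤ ∫⁻ z in C k, f z ∂γ' + 2 * δ * γ' (C k) := by
    intro k
    rcases (C k).eq_empty_or_nonempty with hempty | ⟨q, hq⟩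
    · simp [hempty]
    have hCk := hC.measurableSet k
    calc ∫⁻ z in C k, f z ∂γ ≤ ∫⁻ _ in C k, (f q + δ) ∂γ :=
          setLIntegral_mono' hCk fun p hp => hosc k p hp q hq
      _ = ∫⁻ _ in C k, (f q + δ) ∂γ' := by rw [setLIntegral_const, setLIntegral_const, hcell]
      _ ≤ ∫⁻ z in C k, (f z + 2 * δ) ∂γ' := setLIntegral_mono' hCk fun p hp => by
          rw [two_mul, ← add_assoc]
          exact add_le_add_left (hosc k q hq p hp) δ
      _ = ∫⁻ z in C k, f z ∂γ' + 2 * δ * γ' (C k) := by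
          rw [lintegral_add_right _ measurable_const, setLIntegral_const]
  calc ∫⁻ z, f z ∂γ ≤ ∑' k, (∫⁻ z in C k, f z ∂γ' + 2 * δ * γ' (C k)) := by
        rw [hsplit]; exact ENNReal.tsum_le_tsum hcell_le
    _ = ∫⁻ z, f z ∂γ' + 2 * δ * γ' univ := by
        rw [ENNReal.tsum_add, ENNReal.tsum_mul_left, ← hsplit,
          ← measure_iUnion hC.pairwise_disjoint hC.measurableSet, hC.iUnion_eq_univ]

lemma mul_cond_self_of_le {Ω : Type*} [MeasurableSpace Ω] {ρ : Measure Ω} [IsFiniteMeasure ρ]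
    {s : Set Ω} {a : ℝ≥0∞} (ha : a ≤ ρ s) : a * ρ[s | s] = a := by
  rcases eq_or_ne (ρ s) 0 with h | h
  · rw [nonpos_iff_eq_zero.1 (ha.trans h.le), zero_mul]
  · rw [cond_apply_self h (measure_ne_top ρ s), mul_one]

namespace IsCoupling

variable {X Y : Type*} [MeasurableSpace X] [MeasurableSpace Y] {γ : Measure (X × Y)}
  {μ : Measure X} {ν : Measure Y}

lemma measure_prod_univ (hγ : IsCoupling γ μ ν) {s : Set X} (hs : MeasurableSet s) :
    γ (s ×ˢ univ) = μ s := by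
  rw [Set.prod_univ, ← Measure.map_apply measurable_fst hs, hγ.2.1]

lemma measure_univ_prod (hγ : IsCoupling γ μ ν) {t : Set Y} (ht : MeasurableSet t) :
    γ (univ ×ˢ t) = ν t := by
  rw [Set.univ_prod, ← Measure.map_apply measurable_snd ht, hγ.2.2]

lemma measure_prod_le_left (hγ : IsCoupling γ μ ν) {s : Set X} (hs : MeasurableSet s)
    (t : Set Y) : γ (s ×ˢ t) ≤ μ s :=
  (measure_mono (Set.prod_mono le_rfl (Set.subset_univ t))).trans_eq (hγ.measure_prod_univ hs)

lemma measure_prod_le_right (hγ : IsCoupling γ μ ν) (s : Set X) {t : Set Y}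
    (ht : MeasurableSet t) : γ (s ×ˢ t) ≤ ν t :=
  (measure_mono (Set.prod_mono (Set.subset_univ s) le_rfl)).trans_eq (hγ.measure_univ_prod ht)

lemma swap (hγ : IsCoupling γ μ ν) : IsCoupling (γ.map Prod.swap) ν μ := by
  have := hγ.1
  refine ⟨Measure.isProbabilityMeasure_map measurable_swap.aemeasurable, ?_, ?_⟩
  · rw [Measure.map_map measurable_fst measurable_swap]
    exact hγ.2.2
  · rw [Measure.map_map measurable_snd measurable_swap]
    exact hγ.2.1

end IsCoupling

noncomputable def blockCoupling {X Y ι κ : Type*} [MeasurableSpace X] [MeasurableSpace Y]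
    (A : ι → Set X) (B : κ → Set Y) (μ : Measure X) (ν : Measure Y) (γ : Measure (X × Y)) :
    Measure (X × Y) :=
  Measure.sum fun ij : ι × κ => γ (A ij.1 ×ˢ B ij.2) • (μ[|A ij.1]).prod (ν[|B ij.2])

section blockCoupling

variable {X Y ι κ : Type*} [MeasurableSpace X] [MeasurableSpace Y]
  {A : ι → Set X} {B : κ → Set Y} {μ : Measure X} {ν : Measure Y} {γ : Measure (X × Y)}

lemma blockCoupling_absolutelyContinuous [SFinite ν] : blockCoupling A B μ ν γ ≪ μ.prod ν :=
  Measure.absolutelyContinuous_sum_left fun _ => Measure.smul_absolutelyContinuous.trans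
    (cond_absolutelyContinuous.prod cond_absolutelyContinuous)

lemma blockCoupling_apply_prod [IsFiniteMeasure μ] [IsFiniteMeasure ν]
    (hA : IsMeasurablePartition A) (hB : IsMeasurablePartition B) (hγ : IsCoupling γ μ ν)
    (i : ι) (j : κ) :
    blockCoupling A B μ ν γ (A i ×ˢ B j) = γ (A i ×ˢ B j) := by
  have hAi := hA.measurableSet i
  have hBj := hB.measurableSet j
  rw [blockCoupling, Measure.sum_apply _ (hAi.prod hBj), tsum_eq_single (i, j)]
  · simp only [Measure.smul_apply, Measure.prod_prod, smul_eq_mul]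
    rw [← mul_assoc, mul_cond_self_of_le (hγ.measure_prod_le_left hAi _),
      mul_cond_self_of_le (hγ.measure_prod_le_right _ hBj)]
  · rintro ⟨k, l⟩ hkl
    simp only [Measure.smul_apply, Measure.prod_prod, smul_eq_mul]
    by_cases hk : i = k
    · subst hk
      rw [hB.cond_apply_of_ne ν fun h => hkl (by rw [h]), mul_zero, mul_zero]
    · rw [hA.cond_apply_of_ne μ hk, zero_mul, mul_zero]

lemma blockCoupling_map_fst [Countable ι] [Countable κ] [IsFiniteMeasure μ] [IsFiniteMeasure ν]
    (hA : IsMeasurablePartition A) (hB : IsMeasurablePartition B) (hγ : IsCoupling γ μ ν) :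
    (blockCoupling A B μ ν γ).map Prod.fst = μ := by
  ext s hs
  have hrow : ∀ i j, γ (A i ×ˢ B j) * ν[univ | B j] = γ (A i ×ˢ B j) := fun i j => by
    rw [← cond_inter_self (hB.measurableSet j), Set.inter_univ,
      mul_cond_self_of_le (hγ.measure_prod_le_right _ (hB.measurableSet j))]
  rw [Measure.map_apply measurable_fst hs, ← Set.prod_univ, blockCoupling,
    Measure.sum_apply _ (hs.prod .univ)]
  simp only [Measure.smul_apply, Measure.prod_prod, smul_eq_mul]
  calc ∑' ij : ι × κ, γ (A ij.1 ×ˢ B ij.2) * (μ[s | A ij.1] * ν[univ | B ij.2])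
      = ∑' i, ∑' j, μ[s | A i] * (γ (A i ×ˢ B j) * ν[univ | B j]) := by
        rw [ENNReal.tsum_prod']
        exact tsum_congr fun i => tsum_congr fun j => by ring
    _ = ∑' i, μ[s | A i] * μ (A i) := by
        simp_rw [hrow, ENNReal.tsum_mul_left, hB.tsum_measure_prod_right γ (hA.measurableSet _),
          hγ.measure_prod_univ (hA.measurableSet _)]
    _ = μ s := by
        simp_rw [cond_mul_eq_inter (hA.measurableSet _), Set.inter_comm]
        exact hA.tsum_measure_inter μ hs

lemma blockCoupling_map_swap (hA : IsMeasurablePartition A) (hB : IsMeasurablePartition B) :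
    (blockCoupling A B μ ν γ).map Prod.swap = blockCoupling B A ν μ (γ.map Prod.swap) := by
  rw [blockCoupling, Measure.map_sum measurable_swap.aemeasurable, blockCoupling,
    ← Measure.sum_comp_equiv (Equiv.prodComm ι κ)]
  congr 1
  ext1 ij
  simp only [Function.comp_apply, Equiv.prodComm_apply, Prod.fst_swap, Prod.snd_swap]
  rw [Measure.map_smul, Measure.prod_swap, Measure.map_apply measurable_swap
    ((hB.measurableSet _).prod (hA.measurableSet _)), Set.preimage_swap_prod]

lemma isCoupling_blockCoupling [Countable ι] [Countable κ] [IsFiniteMeasure μ]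
    [IsFiniteMeasure ν] (hA : IsMeasurablePartition A) (hB : IsMeasurablePartition B)
    (hγ : IsCoupling γ μ ν) : IsCoupling (blockCoupling A B μ ν γ) μ ν := by
  have hfst := blockCoupling_map_fst hA hB hγ
  refine ⟨⟨?_⟩, hfst, ?_⟩
  · have := hγ.1
    rw [← Set.preimage_univ (f := Prod.fst), ← Measure.map_apply measurable_fst .univ, hfst,
      ← hγ.measure_prod_univ .univ, Set.univ_prod_univ, measure_univ]
  · change Measure.map (Prod.fst ∘ Prod.swap) _ = ν
    rw [← Measure.map_map measurable_fst measurable_swap, blockCoupling_map_swap hA hB]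
    exact blockCoupling_map_fst hB hA hγ.swap

end blockCoupling

lemma exists_isCoupling_absolutelyContinuous_integral_lt {X Y : Type*} [MetricSpace X]
    [CompactSpace X] [MeasurableSpace X] [BorelSpace X] [MetricSpace Y] [CompactSpace Y]
    [MeasurableSpace Y] [BorelSpace Y] {μ : Measure X} {ν : Measure Y} [IsFiniteMeasure μ]
    [IsFiniteMeasure ν] {c : X × Y → ℝ} (hc : Continuous c) (hc0 : ∀ p, 0 ≤ c p)
    {γ : Measure (X × Y)} (hγ : IsCoupling γ μ ν) {δ : ℝ} (hδ : 0 < δ) :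
    ∃ γ' : Measure (X × Y), IsCoupling γ' μ ν ∧ γ' ≪ μ.prod ν ∧
      ∫ p, c p ∂γ' < ∫ p, c p ∂γ + δ := by
  obtain ⟨r, hr, hclose⟩ := Metric.uniformContinuous_iff.1
    (CompactSpace.uniformContinuous_of_continuous hc) (δ / 4) (by positivity)
  obtain ⟨m, A, hA, hAr⟩ := exists_isMeasurablePartition_fin_dist_lt (X := X) hr
  obtain ⟨n, B, hB, hBr⟩ := exists_isMeasurablePartition_fin_dist_lt (X := Y) hr
  have hγ' := isCoupling_blockCoupling hA hB hγ
  refine ⟨_, hγ', blockCoupling_absolutelyContinuous, ?_⟩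
  have hosc : ∀ ij : Fin m × Fin n, ∀ p ∈ A ij.1 ×ˢ B ij.2, ∀ q ∈ A ij.1 ×ˢ B ij.2,
      ENNReal.ofReal (c p) ≤ ENNReal.ofReal (c q) + ENNReal.ofReal (δ / 4) := by
    rintro ⟨i, j⟩ p hp q hq
    have hpq : dist p q < r := by
      rw [Prod.dist_eq]
      exact max_lt (hAr i _ hp.1 _ hq.1) (hBr j _ hp.2 _ hq.2)
    have hcpq := (abs_sub_lt_iff.1 (Real.dist_eq _ _ ▸ hclose hpq)).1
    rw [← ENNReal.ofReal_add (hc0 q) (by positivity)]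
    exact ENNReal.ofReal_le_ofReal (by linarith)
  have hlint := lintegral_le_of_measure_cells_eq (hA.prod hB)
    (fun ij => blockCoupling_apply_prod hA hB hγ ij.1 ij.2) hosc
  have := hγ.1
  have := hγ'.1
  have hofReal : ∀ (ρ : Measure (X × Y)) [IsFiniteMeasure ρ],
      ENNReal.ofReal (∫ p, c p ∂ρ) = ∫⁻ p, ENNReal.ofReal (c p) ∂ρ := fun ρ _ =>
    ofReal_integral_eq_lintegral_ofReal (hc.integrable_of_hasCompactSupport (.of_compactSpace c))
      (.of_forall hc0)
  have hint_nonneg : 0 ≤ ∫ p, c p ∂γ := integral_nonneg hc0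
  rw [measure_univ, mul_one, ← hofReal, ← hofReal, ← ENNReal.ofReal_ofNat 2,
    ← ENNReal.ofReal_mul zero_le_two, ← ENNReal.ofReal_add hint_nonneg (by positivity),
    ENNReal.ofReal_le_ofReal_iff (by positivity)] at hlint
  linarith

noncomputable def transportCost {X : Type*} [MeasurableSpace X] (c : X × X → ℝ)
    (μ ν : Measure X) : EReal :=
  ⨅ γ : {γ : Measure (X × X) // IsCoupling γ μ ν}, ((∫ p, c p ∂γ.1 : ℝ) : EReal)

section Wce

variable {X : Type*} [MeasurableSpace X] {μ ν : Measure X} {c : X × X → ℝ}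

lemma transportCost_le_Wce [IsProbabilityMeasure μ] [IsProbabilityMeasure ν] {ε : ℝ}
    (hε : 0 ≤ ε) : transportCost c μ ν ≤ Wce c ε μ ν :=
  le_iInf fun γ => by
    have := γ.2.1
    exact (iInf_le _ γ).trans
      (le_add_of_nonneg_right (mul_nonneg (EReal.coe_nonneg.2 hε) (KL_nonneg _ _)))

-- `KL` is a Bochner integral, hence `0` when the log-density is not integrable. For the block
-- couplings this is applied to, the density takes finitely many values, so `KL` is the entropy.
lemma Wce_le_of_absolutelyContinuous [SFinite ν] {γ : Measure (X × X)} (hγ : IsCoupling γ μ ν)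
    (hac : γ ≪ μ.prod ν) (ε : ℝ) :
    Wce c ε μ ν ≤ ((∫ p, c p ∂γ + ε * ∫ p, llr γ (μ.prod ν) p ∂γ : ℝ) : EReal) := by
  refine (iInf_le _ ⟨γ, hγ⟩).trans_eq ?_
  rw [KL, if_pos hac]
  norm_cast

lemma transportCost_self_eq_zero [IsProbabilityMeasure μ] (hc : Measurable c)
    (hc0 : ∀ p, 0 ≤ c p) (hcdiag : ∀ x, c (x, x) = 0) : transportCost c μ μ = 0 := by
  have hdiag : Measurable fun x : X => (x, x) := measurable_id.prodMk measurable_id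
  have hcoupling : IsCoupling (μ.map fun x => (x, x)) μ μ :=
    ⟨Measure.isProbabilityMeasure_map hdiag.aemeasurable,
      by rw [Measure.map_map measurable_fst hdiag]; exact Measure.map_id,
      by rw [Measure.map_map measurable_snd hdiag]; exact Measure.map_id⟩
  refine le_antisymm ((iInf_le _ ⟨_, hcoupling⟩).trans_eq ?_)
    (le_iInf fun γ => EReal.coe_nonneg.2 (integral_nonneg hc0))
  rw [integral_map hdiag.aemeasurable hc.aestronglyMeasurable]
  simp [hcdiag]

theorem tendsto_Wce_transportCost {X : Type*} [MetricSpace X] [CompactSpace X]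
    [MeasurableSpace X] [BorelSpace X] {μ ν : Measure X} [IsProbabilityMeasure μ]
    [IsProbabilityMeasure ν] {c : X × X → ℝ} (hc : Continuous c) (hc0 : ∀ p, 0 ≤ c p) :
    Tendsto (fun ε => Wce c ε μ ν) (𝓝[>] 0) (𝓝 (transportCost c μ ν)) := by
  refine tendsto_order.2 ⟨fun a ha => eventually_nhdsWithin_of_forall fun ε hε =>
    ha.trans_le (transportCost_le_Wce (le_of_lt hε)), fun b hb => ?_⟩
  obtain ⟨γ, hγb⟩ := iInf_lt_iff.1 hb
  obtain ⟨m, hγm, hmb⟩ := EReal.lt_iff_exists_real_btwn.1 hγb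
  obtain ⟨γ', hγ', hac, hγ'm⟩ := exists_isCoupling_absolutelyContinuous_integral_lt hc hc0 γ.2
    (sub_pos.2 (EReal.coe_lt_coe_iff.1 hγm))
  have hlim : Tendsto (fun ε : ℝ => ∫ p, c p ∂γ' + ε * ∫ p, llr γ' (μ.prod ν) p ∂γ')
      (𝓝[>] 0) (𝓝 (∫ p, c p ∂γ')) :=
    ((continuous_const.add (continuous_id.mul continuous_const)).tendsto' 0 _
      (by simp)).mono_left nhdsWithin_le_nhds
  filter_upwards [hlim.eventually (gt_mem_nhds (show ∫ p, c p ∂γ' < m by linarith))] with ε hε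
  exact (Wce_le_of_absolutelyContinuous hγ' hac ε).trans_lt ((EReal.coe_lt_coe_iff.2 hε).trans hmb)

end Wce

lemma EReal.tendsto_sub_of_tendsto_zero {α : Type*} {l : Filter α} {f g : α → EReal} {a : EReal}
    (hf : Tendsto f l (𝓝 a)) (hg : Tendsto g l (𝓝 0)) :
    Tendsto (fun x => f x - g x) l (𝓝 a) := by
  have hadd := (EReal.continuousAt_add (p := (a, 0)) (Or.inr EReal.zero_ne_bot)
    (Or.inr EReal.zero_ne_top)).tendsto.comp (hf.prodMk_nhds (neg_zero (G := EReal) ▸ hg.neg))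
  simpa [sub_eq_add_neg, Function.comp_def] using hadd

theorem sinkhorn_tendsto_OT_as_eps_to_zero
    {X : Type*} [MetricSpace X] [CompactSpace X] [MeasurableSpace X] [BorelSpace X]
    (μ ν : Measure X) [IsProbabilityMeasure μ] [IsProbabilityMeasure ν]
    (c : X × X → ℝ) (hc : Continuous c) (hc0 : ∀ p, 0 ≤ c p)
    (hcdiag : ∀ x : X, c (x, x) = 0) :
    Filter.Tendsto (fun ε : ℝ => Sinkhorn c ε μ ν)
      (nhdsWithin 0 (Set.Ioi 0))
      (nhds (⨅ γ : {γ : Measure (X × X) // IsCoupling γ μ ν},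
        ((∫ p, c p ∂γ.1 : ℝ) : EReal))) := by
  have hself : ∀ (ρ : Measure X) [IsProbabilityMeasure ρ],
      Tendsto (fun ε : ℝ => ((1 / 2 : ℝ) : EReal) * Wce c ε ρ ρ) (𝓝[>] 0) (𝓝 0) := by
    intro ρ _
    have h := EReal.Tendsto.const_mul (a := ((1 / 2 : ℝ) : EReal))
      (tendsto_Wce_transportCost (μ := ρ) (ν := ρ) hc hc0) (Or.inl (EReal.coe_ne_bot _))
      (Or.inl (EReal.coe_ne_top _))
    rwa [transportCost_self_eq_zero hc.measurable hc0 hcdiag, mul_zero] at h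
  exact EReal.tendsto_sub_of_tendsto_zero
    (EReal.tendsto_sub_of_tendsto_zero (tendsto_Wce_transportCost hc hc0) (hself μ)) (hself ν)
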